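/- arXiv:2207.03619 — 4 statements merged into one kernel-verified Lean document; each statement's English description precedes it below -/
import Mathlib

section
/- Let r ≥ 2 and s ≥ 1 be integers and suppose H = (H₁; H₂) is a BSHM(4rs, 4s−1, 4s−1, −1) with respect to the (4s−1) × 4rs submatrix H₁. Then there exists a (4s−1) × 4s matrix L such that the 4s × 4s matrix (𝟙ᵀ; L), obtained by placing the all-ones row on top of L, is a Hadamard matrix of order 4s, and there exists a permutation σ of the column indices {1,…,4rs} such that the matrix obtained from H₁ by permuting its columns according to σ equals the (4s−1) × 4rs block matrix (L L ⋯ L) consisting of r copies of L placed side by side. -/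
open Matrix

/-- A Hadamard matrix of order `n`: entries in `{1,-1}` and `Hᵀ * H = n • 1`. -/
def IsHadamard {n : ℕ} (H : Matrix (Fin n) (Fin n) ℤ) : Prop :=
  (∀ i j, H i j = 1 ∨ H i j = -1) ∧ Hᵀ * H = (n : ℤ) • 1

/-- Dot product of columns `j` and `k` of the submatrix of `H` formed by the rows in `R`. -/
def colDot {n : ℕ} (H : Matrix (Fin n) (Fin n) ℤ) (R : Finset (Fin n)) (j k : Fin n) : ℤ :=
  ∑ i ∈ R, H i j * H i k

/-- `H` is a balanced splittable Hadamard matrix with respect to the submatrix formed by the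
rows in `R`, with values `a, b`. -/
def IsBSHM {n : ℕ} (H : Matrix (Fin n) (Fin n) ℤ) (R : Finset (Fin n)) (a b : ℤ) : Prop :=
  _root_.IsHadamard H ∧ ∀ j k : Fin n, j ≠ k → colDot H R j k = a ∨ colDot H R j k = b

/-!
Write `M` for the `ℓ × n` submatrix `H₁`, where `ℓ = 4s - 1` and `n = 4rs`. Its entries are `±1`,
so two columns have inner product `ℓ` exactly when they are equal, and `-1` otherwise. Hence the
Gram matrix `MᵀM` only depends on the multiplicities `m_v` of the distinct columns `v`, and
`∑ⱼₖ (MᵀM)ⱼₖ² = tr ((MᵀM)²) = tr ((MMᵀ)²) = ℓ n²` becomes `(ℓ + 1) ∑ m_v² = n²`. Prepending a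
coordinate `1` to the distinct columns makes them pairwise orthogonal, so there are at most
`ℓ + 1 = 4s` of them; then Cauchy–Schwarz, `n² = (∑ m_v)² ≤ 4s ∑ m_v² = n²`, is an equality, so
there are exactly `4s` distinct columns, each occurring `r` times. With the row of ones on top,
these columns form the Hadamard matrix `(𝟙ᵀ; L)`.
-/

open Finset

theorem IsHadamard.mul_transpose {n : ℕ} {H : Matrix (Fin n) (Fin n) ℤ}
    (hH : _root_.IsHadamard H) : H * Hᵀ = (n : ℤ) • 1 := by
  rcases Nat.eq_zero_or_pos n with rfl | hn
  · exact Subsingleton.elim _ _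
  have hT : Hᵀ.IsHadamard := by
    refine .of_mul_conjTranspose (fun i j => Unitary.mem_iff_eq_one_or_eq_neg_one.mpr (hH.1 j i))
      ?_ (.of_ne_zero (by simp; omega))
    simpa [conjTranspose_eq_transpose_of_trivial] using hH.2
  simpa [conjTranspose_eq_transpose_of_trivial] using hT.conjTranspose_mul

theorem Matrix.sum_sq_eq_trace_mul_transpose {m n R : Type*} [Fintype m] [Fintype n]
    [CommSemiring R] (A : Matrix m n R) : ∑ i, ∑ j, A i j ^ 2 = trace (A * Aᵀ) := by
  simp [trace, mul_apply, sq]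

theorem Matrix.sum_sq_transpose_mul_self {ι κ R : Type*} [Fintype ι] [Fintype κ] [CommSemiring R]
    (M : Matrix ι κ R) :
    ∑ j, ∑ k, (Mᵀ * M) j k ^ 2 = ∑ i, ∑ i', (M * Mᵀ) i i' ^ 2 := by
  rw [sum_sq_eq_trace_mul_transpose, sum_sq_eq_trace_mul_transpose, transpose_mul, transpose_mul,
    transpose_transpose, Matrix.mul_assoc, trace_mul_comm]
  simp only [Matrix.mul_assoc]

theorem dotProduct_eq_card_iff_eq {ι : Type*} [Fintype ι] {v u : ι → ℤ}
    (hv : ∀ i, v i = 1 ∨ v i = -1) (hu : ∀ i, u i = 1 ∨ u i = -1) :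
    v ⬝ᵥ u = Fintype.card ι ↔ v = u := by
  have hle : ∀ i ∈ (univ : Finset ι), v i * u i ≤ 1 := fun i _ => by
    rcases hv i with h | h <;> rcases hu i with h' | h' <;> simp [h, h']
  have hone : ∀ i, v i * u i = 1 ↔ v i = u i := fun i => by
    rcases hv i with h | h <;> rcases hu i with h' | h' <;> simp [h, h']
  rw [dotProduct, show (Fintype.card ι : ℤ) = ∑ _ : ι, 1 by simp, sum_eq_sum_iff_of_le hle,
    funext_iff]
  simp [hone]

theorem card_le_of_dotProduct_eq_ite {ι : Type*} [Fintype ι] (V : Finset (ι → ℤ))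
    (hV : ∀ v ∈ V, ∀ u ∈ V, v ⬝ᵥ u = if v = u then (Fintype.card ι : ℤ) else -1) :
    #V ≤ Fintype.card ι + 1 := by
  -- Prepending a coordinate `1` makes the vectors pairwise orthogonal.
  let W : Matrix V (Option ι) ℚ := of fun v o => o.elim 1 fun i => (v.1 i : ℚ)
  have hd : ((Fintype.card ι + 1 : ℕ) : ℚ) ≠ 0 := by positivity
  have hW : W * Wᵀ = ((Fintype.card ι + 1 : ℕ) : ℚ) • 1 := by
    ext v u
    have h := congrArg (Int.cast : ℤ → ℚ) (hV v.1 v.2 u.1 u.2)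
    simp only [dotProduct, Int.cast_sum, Int.cast_mul] at h
    simp only [mul_apply, Fintype.sum_option, W, transpose_apply, of_apply, Option.elim,
      Matrix.smul_apply, one_apply, h, Subtype.ext_iff]
    split_ifs <;> push_cast <;> ring
  calc #V = (1 : Matrix V V ℚ).rank := by simp
    _ = (W * (((Fintype.card ι + 1 : ℕ) : ℚ)⁻¹ • Wᵀ)).rank := by
      rw [Matrix.mul_smul, hW, smul_smul, inv_mul_cancel₀ hd, one_smul]
    _ ≤ W.rank := rank_mul_le_left _ _
    _ ≤ Fintype.card (Option ι) := rank_le_card_width W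
    _ = Fintype.card ι + 1 := Fintype.card_option

-- The equality case of Cauchy–Schwarz.
theorem Finset.mul_eq_of_mul_sum_sq_eq_sq {α : Type*} (V : Finset α) (m : α → ℤ) {n q : ℤ}
    (hsum : ∑ v ∈ V, m v = n) (hsq : q * ∑ v ∈ V, m v ^ 2 = n ^ 2) (hcard : (#V : ℤ) ≤ q) :
    ∀ v ∈ V, q * m v = n := by
  have hdev : ∑ v ∈ V, (q * m v - n) ^ 2 = (#V - q) * n ^ 2 := by
    have : ∀ v ∈ V, (q * m v - n) ^ 2 = q * (q * m v ^ 2) - 2 * q * n * m v + n ^ 2 :=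
      fun v _ => by ring
    rw [sum_congr rfl this, sum_add_distrib, sum_sub_distrib, ← mul_sum, ← mul_sum, ← mul_sum,
      hsum, hsq, sum_const, nsmul_eq_mul]
    ring
  have hzero : ∑ v ∈ V, (q * m v - n) ^ 2 = 0 :=
    le_antisymm (hdev ▸ mul_nonpos_of_nonpos_of_nonneg (by linarith) (sq_nonneg n))
      (sum_nonneg fun v _ => sq_nonneg _)
  intro v hv
  have := (sum_eq_zero_iff_of_nonneg fun v _ => sq_nonneg (q * m v - n)).mp hzero v hv
  linarith [pow_eq_zero_iff two_ne_zero |>.mp this]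

theorem sum_sum_boole_eq_sum_card_fiber_sq {κ β : Type*} [Fintype κ] [DecidableEq β] (c : κ → β) :
    ∑ j, ∑ k, (if c j = c k then 1 else 0 : ℤ) = ∑ v ∈ univ.image c, (#{j | c j = v} : ℤ) ^ 2 := by
  calc ∑ j, ∑ k, (if c j = c k then 1 else 0 : ℤ) = ∑ j, (#{k | c k = c j} : ℤ) := by
        simp [eq_comm]
    _ = _ := by
        rw [sum_comp (fun v => (#{k | c k = v} : ℤ)) c]
        simp [sq]

theorem Finset.card_eq_card_image_mul {α β : Type*} [DecidableEq β] (f : α → β) (s : Finset α)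
    {r : ℕ} (hf : ∀ b ∈ s.image f, #{a ∈ s | f a = b} = r) : #s = #(s.image f) * r := by
  rw [card_eq_sum_card_image f s, sum_congr rfl hf, sum_const, smul_eq_mul]

theorem Equiv.exists_prod_equiv_of_card_fiber {α β : Type*} [Fintype α] [DecidableEq β]
    {f : α → β} {r : ℕ} (hf : ∀ b, #{a | f a = b} = r) :
    ∃ σ : Fin r × β ≃ α, ∀ p, f (σ p) = p.2 := by
  let e : ∀ b, Fin r ≃ {a // f a = b} := fun b =>
    (Fintype.equivFinOfCardEq (by rw [Fintype.card_subtype, hf])).symm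
  exact ⟨(prodComm _ _).trans ((sigmaEquivProd _ _).symm.trans
    ((sigmaCongrRight e).trans (sigmaFiberEquiv f))), fun p => (e p.2 p.1).2⟩

theorem Equiv.exists_prod_image_equiv_of_card_fiber {α β : Type*} [Fintype α] [DecidableEq β]
    {f : α → β} {r : ℕ} (hf : ∀ b ∈ univ.image f, #{a | f a = b} = r) :
    ∃ σ : Fin r × univ.image f ≃ α, ∀ p, f (σ p) = p.2 := by
  let g : α → univ.image f := fun a => ⟨f a, mem_image_of_mem f (mem_univ a)⟩
  obtain ⟨σ, hσ⟩ := exists_prod_equiv_of_card_fiber (f := g) (r := r) fun b => by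
    rw [← hf b b.2]
    congr! 2 with a
    exact Subtype.ext_iff
  exact ⟨σ, fun p => congrArg Subtype.val (hσ p)⟩

def consOnesRow {m N : ℕ} (L : Matrix (Fin (N - 1)) (Fin m) ℤ) : Matrix (Fin N) (Fin m) ℤ :=
  of fun i j => if h : i.val = 0 then 1 else L ⟨i.val - 1, by omega⟩ j

theorem transpose_mul_self_consOnesRow {m N : ℕ} (hN : 0 < N) (L : Matrix (Fin (N - 1)) (Fin m) ℤ)
    (t u : Fin m) : ((consOnesRow L)ᵀ * consOnesRow L) t u = 1 + (Lᵀ * L) t u := by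
  obtain ⟨N, rfl⟩ : ∃ k, N = k + 1 := ⟨N - 1, by omega⟩
  simp only [mul_apply, transpose_apply, Fin.sum_univ_succ, consOnesRow, of_apply]
  simp

theorem isHadamard_consOnesRow {N : ℕ} (hN : 0 < N) (L : Matrix (Fin (N - 1)) (Fin N) ℤ)
    (hpm : ∀ i j, L i j = 1 ∨ L i j = -1)
    (hL : ∀ t u, (Lᵀ * L) t u = if t = u then (N : ℤ) - 1 else -1) :
    _root_.IsHadamard (consOnesRow L) := by
  refine ⟨fun i j => ?_, ?_⟩
  · rw [consOnesRow, of_apply]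
    split_ifs
    · exact .inl rfl
    · exact hpm _ j
  · ext t u
    rw [transpose_mul_self_consOnesRow hN, hL, Matrix.smul_apply, one_apply]
    split_ifs <;> simp

theorem isHadamard_consOnesRow_of_dotProduct_eq_ite {ι : Type*} [Fintype ι] {N : ℕ}
    {V : Finset (ι → ℤ)} (hpm : ∀ v ∈ V, ∀ i, v i = 1 ∨ v i = -1)
    (hV : ∀ v ∈ V, ∀ u ∈ V, v ⬝ᵥ u = if v = u then (Fintype.card ι : ℤ) else -1)
    (hN : Fintype.card ι + 1 = N) (τ : Fin N ≃ V) (e : ι ≃ Fin (N - 1)) :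
    _root_.IsHadamard (consOnesRow (of fun a t => (τ t : ι → ℤ) (e.symm a))) := by
  refine isHadamard_consOnesRow (by omega) _ (fun a t => hpm _ (τ t).2 _) fun t u => ?_
  have hdot : ∑ a, (τ t : ι → ℤ) (e.symm a) * (τ u : ι → ℤ) (e.symm a) = (τ t : ι → ℤ) ⬝ᵥ τ u :=
    e.symm.sum_comp fun i => (τ t : ι → ℤ) i * (τ u : ι → ℤ) i
  simp only [mul_apply, transpose_apply, of_apply, hdot, hV _ (τ t).2 _ (τ u).2,
    ← Subtype.ext_iff, τ.apply_eq_iff_eq]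
  split_ifs <;> omega

section Columns

variable {ι κ : Type*} [Fintype ι] {M : Matrix ι κ ℤ}

theorem transpose_mul_self_apply_eq_ite (hpm : ∀ i j, M i j = 1 ∨ M i j = -1)
    (hcol : ∀ j k, j ≠ k → (Mᵀ * M) j k = Fintype.card ι ∨ (Mᵀ * M) j k = -1) (j k : κ) :
    (Mᵀ * M) j k = if M.col j = M.col k then (Fintype.card ι : ℤ) else -1 := by
  have hdot : (Mᵀ * M) j k = M.col j ⬝ᵥ M.col k := rfl
  have hcard := dotProduct_eq_card_iff_eq (v := M.col j) (u := M.col k) (hpm · j) (hpm · k)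
  split_ifs with hjk
  · rwa [hdot, hcard]
  · rcases hcol j k (fun h => hjk (h ▸ rfl)) with h | h
    · exact absurd (hcard.mp (hdot ▸ h)) hjk
    · exact h

theorem dotProduct_eq_ite_of_mem_image_col [Fintype κ] (hpm : ∀ i j, M i j = 1 ∨ M i j = -1)
    (hcol : ∀ j k, j ≠ k → (Mᵀ * M) j k = Fintype.card ι ∨ (Mᵀ * M) j k = -1) :
    ∀ v ∈ univ.image M.col, ∀ u ∈ univ.image M.col,
      v ⬝ᵥ u = if v = u then (Fintype.card ι : ℤ) else -1 := by
  simp only [mem_image, mem_univ, true_and, forall_exists_index, forall_apply_eq_imp_iff]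
  exact transpose_mul_self_apply_eq_ite hpm hcol

theorem mul_sum_card_fiber_sq [DecidableEq ι] [Fintype κ] (hpm : ∀ i j, M i j = 1 ∨ M i j = -1)
    (hrow : M * Mᵀ = (Fintype.card κ : ℤ) • 1)
    (hcol : ∀ j k, j ≠ k → (Mᵀ * M) j k = Fintype.card ι ∨ (Mᵀ * M) j k = -1)
    (hι : 1 < Fintype.card ι) :
    ((Fintype.card ι : ℤ) + 1) * ∑ v ∈ univ.image M.col, (#{j | M.col j = v} : ℤ) ^ 2
      = (Fintype.card κ : ℤ) ^ 2 := by
  have hrows : ∑ j, ∑ k, (Mᵀ * M) j k ^ 2 = Fintype.card ι * (Fintype.card κ : ℤ) ^ 2 := by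
    rw [sum_sq_transpose_mul_self, hrow]
    simp [one_apply]
  have hcols : ∑ j, ∑ k, (Mᵀ * M) j k ^ 2 = ((Fintype.card ι : ℤ) ^ 2 - 1) *
      ∑ j, ∑ k, (if M.col j = M.col k then 1 else 0 : ℤ) + (Fintype.card κ : ℤ) ^ 2 := by
    calc ∑ j, ∑ k, (Mᵀ * M) j k ^ 2
        = ∑ j, ∑ k, (((Fintype.card ι : ℤ) ^ 2 - 1) *
            (if M.col j = M.col k then 1 else 0 : ℤ) + 1) := by
          simp only [transpose_mul_self_apply_eq_ite hpm hcol]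
          congr! 2 with j _ k
          split_ifs <;> ring
      _ = _ := by
          simp only [sum_add_distrib, ← mul_sum, sum_const, card_univ, nsmul_eq_mul, mul_one]
          ring
  rw [← sum_sum_boole_eq_sum_card_fiber_sq]
  have hℓ : (Fintype.card ι : ℤ) - 1 ≠ 0 := by omega
  apply mul_left_cancel₀ hℓ
  linear_combination hcols.symm.trans hrows

theorem mul_card_fiber_eq [DecidableEq ι] [Fintype κ] (hpm : ∀ i j, M i j = 1 ∨ M i j = -1)
    (hrow : M * Mᵀ = (Fintype.card κ : ℤ) • 1)
    (hcol : ∀ j k, j ≠ k → (Mᵀ * M) j k = Fintype.card ι ∨ (Mᵀ * M) j k = -1)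
    (hι : 1 < Fintype.card ι) :
    ∀ v ∈ univ.image M.col, (Fintype.card ι + 1) * #{j | M.col j = v} = Fintype.card κ := by
  have hsum : ∑ v ∈ univ.image M.col, (#{j | M.col j = v} : ℤ) = Fintype.card κ := by
    exact_mod_cast (card_eq_sum_card_image M.col univ).symm
  have hcard : (#(univ.image M.col) : ℤ) ≤ Fintype.card ι + 1 := by
    exact_mod_cast card_le_of_dotProduct_eq_ite _ (dotProduct_eq_ite_of_mem_image_col hpm hcol)
  intro v hv
  exact_mod_cast (univ.image M.col).mul_eq_of_mul_sum_sq_eq_sq _ hsum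
    (mul_sum_card_fiber_sq hpm hrow hcol hι) hcard v hv

theorem exists_consOnesRow_isHadamard [DecidableEq ι] [Fintype κ]
    (hpm : ∀ i j, M i j = 1 ∨ M i j = -1) (hrow : M * Mᵀ = (Fintype.card κ : ℤ) • 1)
    (hcol : ∀ j k, j ≠ k → (Mᵀ * M) j k = Fintype.card ι ∨ (Mᵀ * M) j k = -1)
    (hι : 1 < Fintype.card ι) {N r : ℕ} (hN : Fintype.card ι + 1 = N)
    (hn : Fintype.card κ = r * N) (hr : r ≠ 0) :
    ∃ L : Matrix (Fin (N - 1)) (Fin N) ℤ, _root_.IsHadamard (consOnesRow L) ∧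
      ∃ (e : ι ≃ Fin (N - 1)) (σ : Fin r × Fin N ≃ κ), ∀ i p, M i (σ p) = L (e i) p.2 := by
  have hfib : ∀ v ∈ univ.image M.col, #{j | M.col j = v} = r := fun v hv => by
    have := mul_card_fiber_eq hpm hrow hcol hι v hv
    rw [hN, hn, mul_comm r] at this
    exact Nat.eq_of_mul_eq_mul_left (by omega) this
  have hV : #(univ.image M.col) = N := by
    have := card_eq_card_image_mul M.col univ hfib
    rw [card_univ, hn, mul_comm] at this
    exact (Nat.eq_of_mul_eq_mul_right (Nat.pos_of_ne_zero hr) this).symm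
  let τ : Fin N ≃ univ.image M.col :=
    (Fintype.equivFinOfCardEq (by rw [Fintype.card_coe, hV])).symm
  let e : ι ≃ Fin (N - 1) := Fintype.equivFinOfCardEq (by omega)
  obtain ⟨σ, hσ⟩ := Equiv.exists_prod_image_equiv_of_card_fiber hfib
  refine ⟨of fun a t => (τ t : ι → ℤ) (e.symm a), ?_, e, ((Equiv.refl _).prodCongr τ).trans σ,
    fun i p => ?_⟩
  · refine isHadamard_consOnesRow_of_dotProduct_eq_ite (fun v hv i => ?_)
      (dotProduct_eq_ite_of_mem_image_col hpm hcol) hN τ e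
    obtain ⟨j, -, rfl⟩ := mem_image.mp hv
    exact hpm i j
  · simp only [of_apply, Equiv.symm_apply_apply]
    exact congrFun (hσ (p.1, τ p.2)) i

end Columns

theorem stmt16 {r s : ℕ} (hs : 1 ≤ s)
    (H : Matrix (Fin (4 * r * s)) (Fin (4 * r * s)) ℤ)
    (R : Finset (Fin (4 * r * s))) (hRcard : R.card = 4 * s - 1)
    (hbshm : IsBSHM H R (4 * (s : ℤ) - 1) (-1)) :
    ∃ L : Matrix (Fin (4 * s - 1)) (Fin (4 * s)) ℤ,
      -- the matrix obtained by placing the all-ones row on top of `L` is a Hadamard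
      -- matrix of order `4s`
      _root_.IsHadamard (Matrix.of fun i j : Fin (4 * s) =>
        if h : i.val = 0 then 1 else L ⟨i.val - 1, by have := i.isLt; omega⟩ j) ∧
      ∃ (e : {x // x ∈ R} ≃ Fin (4 * s - 1)) (σ : (Fin r × Fin (4 * s)) ≃ Fin (4 * r * s)),
        ∀ (i : {x // x ∈ R}) (p : Fin r × Fin (4 * s)),
          H i.val (σ p) = L (e i) p.2 := by
  obtain ⟨hH, hsplit⟩ := hbshm
  let M : Matrix {x // x ∈ R} (Fin (4 * r * s)) ℤ := of fun i j => H i j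
  have hcardR : Fintype.card {x // x ∈ R} = 4 * s - 1 := by simp [hRcard]
  have hr : r ≠ 0 := by
    rintro rfl
    have := R.card_le_univ
    simp only [Fintype.card_fin, mul_zero, zero_mul] at this
    omega
  refine exists_consOnesRow_isHadamard (M := M) (fun i j => hH.1 i j) ?_ ?_ (by omega) (by omega)
    (by simp; ring) hr
  · ext i i'
    rw [show (M * Mᵀ) i i' = (H * Hᵀ) i i' from rfl, hH.mul_transpose, Matrix.smul_apply,
      Matrix.smul_apply, one_apply, one_apply, Fintype.card_fin]
    simp only [Subtype.ext_iff]
  · intro j k hjk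
    have : (Mᵀ * M) j k = colDot H R j k := sum_coe_sort R fun i => H i j * H i k
    rw [this, hcardR]
    push_cast [Nat.cast_sub (by omega : 1 ≤ 4 * s)]
    exact hsplit j k hjk
end

section
/- Let n, ℓ, m be positive integers with 1 ≤ ℓ ≤ n−1. Suppose there exists a Hadamard matrix of order n that is a BSHM(n,ℓ,ℓ,0) with respect to some ℓ×n submatrix of its rows, and suppose there exists a Hadamard matrix of order m. Then there exists a Hadamard matrix of order nm that is a BSHM(nm, ℓm, ℓm, 0) with respect to some ℓm × nm submatrix of its rows. (Concretely, if K is the order-m Hadamard matrix and H is the BSHM(n,ℓ,ℓ,0) with respect to H₁, then the Kronecker product H ⊗ K is a BSHM(nm,ℓm,ℓm,0) with respect to H₁ ⊗ K.) -/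
/-! The Kronecker product of two Hadamard matrices is Hadamard, since
`(H ⊗ K)ᵀ (H ⊗ K) = (Hᵀ H) ⊗ (Kᵀ K) = (n • 1) ⊗ (m • 1) = (n m) • 1`.
Restricted to the rows `R × [m]`, the dot product of columns `(j, s)` and `(k, t)` factors as
`colDot H R j k * ⟨K_s, K_t⟩`; the second factor is `m` if `s = t` and `0` otherwise, so the
values `ℓ, 0` for `H₁` become `ℓ m, 0` for `H₁ ⊗ K`. -/

open Matrix Finset

/-- A Hadamard matrix indexed by a finite type `I`: entries in `{1,-1}` and
`Hᵀ * H = (card I) • 1` (so its order is the cardinality of `I`). -/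
def IsHadamardOn {I : Type} [Fintype I] [DecidableEq I] (H : Matrix I I ℤ) : Prop :=
  (∀ i j, H i j = 1 ∨ H i j = -1) ∧ Hᵀ * H = (Fintype.card I : ℤ) • 1

open scoped Kronecker

section Hadamard

variable {I J : Type} [Fintype I] [DecidableEq I] [Fintype J] [DecidableEq J]

theorem isHadamard_iff_isHadamardOn {n : ℕ} (H : Matrix (Fin n) (Fin n) ℤ) :
    _root_.IsHadamard H ↔ IsHadamardOn H := by
  rw [_root_.IsHadamard, IsHadamardOn, Fintype.card_fin]

theorem IsHadamardOn.sum_mul_col {H : Matrix I I ℤ} (hH : IsHadamardOn H) (a b : I) :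
    ∑ t, H t a * H t b = if a = b then (Fintype.card I : ℤ) else 0 := by
  simpa [mul_apply, one_apply] using congrFun₂ hH.2 a b

theorem IsHadamardOn.kronecker {H : Matrix I I ℤ} {K : Matrix J J ℤ} (hH : IsHadamardOn H)
    (hK : IsHadamardOn K) : IsHadamardOn (H ⊗ₖ K) := by
  refine ⟨fun x y => ?_, ?_⟩
  · rcases hH.1 x.1 y.1 with h | h <;> rcases hK.1 x.2 y.2 with k | k <;>
      simp [h, k]
  · rw [← kroneckerMap_transpose, ← mul_kronecker_mul,
      hH.2, hK.2, smul_kronecker, kronecker_smul, one_kronecker_one, smul_smul,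
      Fintype.card_prod, Nat.cast_mul, mul_comm]

theorem IsHadamardOn.reindex {H : Matrix I I ℤ} (hH : IsHadamardOn H) (e : I ≃ J) :
    IsHadamardOn (Matrix.reindex e e H) := by
  refine ⟨fun i j => hH.1 _ _, ?_⟩
  rw [reindex_apply, transpose_submatrix, submatrix_mul_equiv, hH.2]
  ext i j
  simp only [submatrix_apply, Matrix.smul_apply, one_apply, e.symm.injective.eq_iff,
    Fintype.card_congr e]

end Hadamard

theorem sum_kronecker_mul_kronecker {I J I' J' : Type} (H : Matrix I I' ℤ) (K : Matrix J J' ℤ)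
    (S : Finset I) (T : Finset J) (p q : I' × J') :
    ∑ x ∈ S ×ˢ T, (H ⊗ₖ K) x p * (H ⊗ₖ K) x q =
      (∑ i ∈ S, H i p.1 * H i q.1) * ∑ t ∈ T, K t p.2 * K t q.2 := by
  simp only [sum_product, sum_mul_sum, kroneckerMap_apply]
  exact sum_congr rfl fun _ _ => sum_congr rfl fun _ _ => by ring

theorem IsHadamardOn.sum_kronecker_mul_kronecker_univ {I I' J : Type} [Fintype J] [DecidableEq J]
    (H : Matrix I I' ℤ) {K : Matrix J J ℤ} (hK : IsHadamardOn K) (S : Finset I) (p q : I' × J) :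
    ∑ x ∈ S ×ˢ univ, (H ⊗ₖ K) x p * (H ⊗ₖ K) x q =
      if p.2 = q.2 then (∑ i ∈ S, H i p.1 * H i q.1) * Fintype.card J else 0 := by
  rw [sum_kronecker_mul_kronecker, hK.sum_mul_col, mul_ite, mul_zero]

theorem colDot_reindex {I : Type} [Fintype I] {N : ℕ} (M : Matrix I I ℤ) (e : I ≃ Fin N)
    (S : Finset I) (j k : Fin N) :
    colDot (Matrix.reindex e e M) (S.map e.toEmbedding) j k =
      ∑ x ∈ S, M x (e.symm j) * M x (e.symm k) := by
  simp [colDot, sum_map]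

theorem isBSHM_reindex {I : Type} [Fintype I] [DecidableEq I] {N : ℕ} {M : Matrix I I ℤ}
    (hM : IsHadamardOn M) (e : I ≃ Fin N) (S : Finset I) (a b : ℤ)
    (hS : ∀ p q, p ≠ q → ∑ x ∈ S, M x p * M x q = a ∨ ∑ x ∈ S, M x p * M x q = b) :
    IsBSHM (Matrix.reindex e e M) (S.map e.toEmbedding) a b := by
  refine ⟨(isHadamard_iff_isHadamardOn _).2 (hM.reindex e), fun j k hjk => ?_⟩
  rw [colDot_reindex]
  exact hS _ _ (e.symm.injective.ne hjk)

theorem sum_kronecker_mul_kronecker_eq_or_eq_zero {J : Type} [Fintype J] [DecidableEq J] {n : ℕ}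
    {H : Matrix (Fin n) (Fin n) ℤ} {R : Finset (Fin n)} {a : ℤ}
    (hH : ∀ j k, j ≠ k → colDot H R j k = a ∨ colDot H R j k = 0)
    {K : Matrix J J ℤ} (hK : IsHadamardOn K) {p q : Fin n × J} (hpq : p ≠ q) :
    ∑ x ∈ R ×ˢ univ, (H ⊗ₖ K) x p * (H ⊗ₖ K) x q = a * Fintype.card J ∨
      ∑ x ∈ R ×ˢ univ, (H ⊗ₖ K) x p * (H ⊗ₖ K) x q = 0 := by
  rw [hK.sum_kronecker_mul_kronecker_univ]
  by_cases hsnd : p.2 = q.2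
  · have hfst : p.1 ≠ q.1 := fun hfst => hpq (Prod.ext hfst hsnd)
    rcases hH p.1 q.1 hfst with h | h
    · exact .inl (by rw [if_pos hsnd, ← colDot, h])
    · exact .inr (by rw [if_pos hsnd, ← colDot, h, zero_mul])
  · exact .inr (if_neg hsnd)

theorem stmt17_general {n m ℓ : ℕ}
    (H : Matrix (Fin n) (Fin n) ℤ) (R : Finset (Fin n)) (hRcard : R.card = ℓ)
    (hbshm : IsBSHM H R (ℓ : ℤ) 0)
    (K : Matrix (Fin m) (Fin m) ℤ) (hK : IsHadamardOn K) :
    -- the Kronecker product `H ⊗ K` is a Hadamard matrix of order `nm` that is a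
    -- `BSHM(nm, ℓm, ℓm, 0)` with respect to the rows `R × univ` (i.e. `H₁ ⊗ K`)
    (IsHadamardOn (Matrix.kroneckerMap (· * ·) H K) ∧
     (R ×ˢ (Finset.univ : Finset (Fin m))).card = ℓ * m ∧
     (∀ p q : Fin n × Fin m, p ≠ q →
       (∑ x ∈ R ×ˢ (Finset.univ : Finset (Fin m)),
         Matrix.kroneckerMap (· * ·) H K x p * Matrix.kroneckerMap (· * ·) H K x q)
           = ((ℓ * m : ℕ) : ℤ) ∨
       (∑ x ∈ R ×ˢ (Finset.univ : Finset (Fin m)),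
         Matrix.kroneckerMap (· * ·) H K x p * Matrix.kroneckerMap (· * ·) H K x q) = 0)) ∧
    -- hence there exists a Hadamard matrix of order `nm` that is a `BSHM(nm, ℓm, ℓm, 0)`
    -- with respect to some `ℓm × nm` submatrix of its rows
    (∃ (H' : Matrix (Fin (n * m)) (Fin (n * m)) ℤ) (R' : Finset (Fin (n * m))),
      R'.card = ℓ * m ∧ IsBSHM H' R' ((ℓ * m : ℕ) : ℤ) 0) := by
  obtain ⟨hH, hcol⟩ := hbshm
  have hHK : IsHadamardOn (H ⊗ₖ K) := ((isHadamard_iff_isHadamardOn H).1 hH).kronecker hK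
  have hcard : (R ×ˢ (univ : Finset (Fin m))).card = ℓ * m := by
    rw [card_product, hRcard, card_univ, Fintype.card_fin]
  have hpairs : ∀ p q : Fin n × Fin m, p ≠ q →
      ∑ x ∈ R ×ˢ univ, (H ⊗ₖ K) x p * (H ⊗ₖ K) x q = ((ℓ * m : ℕ) : ℤ) ∨
        ∑ x ∈ R ×ˢ univ, (H ⊗ₖ K) x p * (H ⊗ₖ K) x q = 0 := fun p q hpq => by
    simpa using sum_kronecker_mul_kronecker_eq_or_eq_zero hcol hK hpq
  refine ⟨⟨hHK, hcard, hpairs⟩, reindex finProdFinEquiv finProdFinEquiv (H ⊗ₖ K),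
    (R ×ˢ univ).map finProdFinEquiv.toEmbedding, by rw [card_map, hcard], ?_⟩
  exact isBSHM_reindex hHK finProdFinEquiv _ _ _ hpairs

theorem stmt17 {n m ℓ : ℕ} (hℓ1 : 1 ≤ ℓ) (hℓ2 : ℓ ≤ n - 1) (hm : 1 ≤ m)
    (H : Matrix (Fin n) (Fin n) ℤ) (R : Finset (Fin n)) (hRcard : R.card = ℓ)
    (hbshm : IsBSHM H R (ℓ : ℤ) 0)
    (K : Matrix (Fin m) (Fin m) ℤ) (hK : IsHadamardOn K) :
    -- the Kronecker product `H ⊗ K` is a Hadamard matrix of order `nm` that is a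
    -- `BSHM(nm, ℓm, ℓm, 0)` with respect to the rows `R × univ` (i.e. `H₁ ⊗ K`)
    (IsHadamardOn (Matrix.kroneckerMap (· * ·) H K) ∧
     (R ×ˢ (Finset.univ : Finset (Fin m))).card = ℓ * m ∧
     (∀ p q : Fin n × Fin m, p ≠ q →
       (∑ x ∈ R ×ˢ (Finset.univ : Finset (Fin m)),
         Matrix.kroneckerMap (· * ·) H K x p * Matrix.kroneckerMap (· * ·) H K x q)
           = ((ℓ * m : ℕ) : ℤ) ∨
       (∑ x ∈ R ×ˢ (Finset.univ : Finset (Fin m)),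
         Matrix.kroneckerMap (· * ·) H K x p * Matrix.kroneckerMap (· * ·) H K x q) = 0)) ∧
    -- hence there exists a Hadamard matrix of order `nm` that is a `BSHM(nm, ℓm, ℓm, 0)`
    -- with respect to some `ℓm × nm` submatrix of its rows
    (∃ (H' : Matrix (Fin (n * m)) (Fin (n * m)) ℤ) (R' : Finset (Fin (n * m))),
      R'.card = ℓ * m ∧ IsBSHM H' R' ((ℓ * m : ℕ) : ℤ) 0) :=
  stmt17_general H R hRcard hbshm K hK
end

section
/- Let r ≥ 2 and s ≥ 1 be integers. Then the following are equivalent: (i) there exists a Hadamard matrix of order 4rs that is a BSHM(4rs, 4s, 4s, 0) with respect to some 4s × 4rs submatrix of its rows; (ii) there exists a Hadamard matrix of order 4rs that has the all-ones row among its rows and is a BSHM(4rs, 4s−1, 4s−1, −1) with respect to some (4s−1) × 4rs submatrix of its rows. -/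
open Matrix

/-
Forward direction: multiplying every column by its entry in a row `i₀ ∈ R` makes row `i₀` all
ones and keeps the Hadamard property; dropping `i₀` from `R` lowers every column inner product by
one, and the value `4s` can only occur between columns agreeing on all of `R`.

Backward direction: adding the all-ones row to `R` raises every inner product by one, provided
that row is not already in `R`. If it were, let `C` be the set of columns agreeing with a fixed
column on `R`. Since the all-ones row is orthogonal to every other row, the inner products of
the fixed column with all columns add up to `n`, which forces `|C| (|R| + 1) = 2n`. On the other
hand the columns of `H` are orthogonal, so the squared norm of the sum of the columns in `C`
is `n |C|`, of which the rows in `R` alone contribute `|C|² |R|`. Together these give `|R| ≤ 1`.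
-/

section

variable {n : ℕ} {H : Matrix (Fin n) (Fin n) ℤ}

theorem IsHadamard.mul_self_entry (hH : _root_.IsHadamard H) (i j : Fin n) :
    H i j * H i j = 1 := by
  rcases hH.1 i j with h | h <;> simp [h]

theorem IsHadamard.sum_mul_col (hH : _root_.IsHadamard H) (j k : Fin n) :
    ∑ i, H i j * H i k = if j = k then (n : ℤ) else 0 := by
  simpa [Matrix.mul_apply, Matrix.one_apply] using congr_fun (congr_fun hH.2 j) k

theorem IsHadamard.sum_sq_sum_cols (hH : _root_.IsHadamard H) (C : Finset (Fin n)) :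
    ∑ i, (∑ k ∈ C, H i k) ^ 2 = n * C.card := by
  calc ∑ i, (∑ k ∈ C, H i k) ^ 2 = ∑ k ∈ C, ∑ l ∈ C, ∑ i, H i k * H i l := by
        simp only [sq, Finset.sum_mul_sum]
        rw [Finset.sum_comm]
        exact Finset.sum_congr rfl fun _ _ => Finset.sum_comm
    _ = n * C.card := by
        simp [hH.sum_mul_col, mul_comm]

/-- The sum of all columns has squared norm `n²`, which its entry in the all-ones row already
attains. -/
theorem IsHadamard.sum_row_eq_zero (hH : _root_.IsHadamard H) {i₀ i : Fin n}
    (hi₀ : ∀ j, H i₀ j = 1) (hi : i ≠ i₀) : ∑ j, H i j = 0 := by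
  have h := hH.sum_sq_sum_cols Finset.univ
  rw [← Finset.add_sum_erase _ _ (Finset.mem_univ i₀)] at h
  simp only [hi₀, Finset.sum_const, Finset.card_univ, Fintype.card_fin, nsmul_eq_mul,
    mul_one] at h
  have hzero : ∑ x ∈ Finset.univ.erase i₀, (∑ j, H x j) ^ 2 = 0 := by linarith
  rw [Finset.sum_eq_zero_iff_of_nonneg (fun _ _ => sq_nonneg _)] at hzero
  exact pow_eq_zero_iff two_ne_zero |>.mp (hzero i (by simp [hi]))

theorem colDot_insert {R : Finset (Fin n)} {i : Fin n} (hi : i ∉ R) (j k : Fin n) :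
    colDot H (insert i R) j k = H i j * H i k + colDot H R j k :=
  Finset.sum_insert hi

theorem colDot_mul_diagonal (R : Finset (Fin n)) (d : Fin n → ℤ) (j k : Fin n) :
    colDot (H * diagonal d) R j k = d j * d k * colDot H R j k := by
  simp only [colDot, mul_diagonal, Finset.mul_sum]
  exact Finset.sum_congr rfl fun _ _ => by ring

theorem IsHadamard.colDot_eq_card_iff (hH : _root_.IsHadamard H) {R : Finset (Fin n)}
    {j k : Fin n} : colDot H R j k = R.card ↔ ∀ i ∈ R, H i j = H i k := by
  have hle : ∀ i ∈ R, H i j * H i k ≤ 1 := fun i _ => by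
    rcases hH.1 i j with h | h <;> rcases hH.1 i k with h' | h' <;> simp [h, h']
  have hone : ∀ i, H i j * H i k = 1 ↔ H i j = H i k := fun i => by
    rcases hH.1 i j with h | h <;> rcases hH.1 i k with h' | h' <;> simp [h, h']
  calc colDot H R j k = R.card ↔ ∑ i ∈ R, H i j * H i k = ∑ i ∈ R, 1 := by simp [colDot]
    _ ↔ ∀ i ∈ R, H i j * H i k = 1 := Finset.sum_eq_sum_iff_of_le hle
    _ ↔ ∀ i ∈ R, H i j = H i k := by simp only [hone]

theorem IsHadamard.sum_colDot_of_allOnes_row_mem (hH : _root_.IsHadamard H)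
    {R : Finset (Fin n)} {i₀ : Fin n} (hi₀ : ∀ j, H i₀ j = 1) (hmem : i₀ ∈ R) (j : Fin n) :
    ∑ k, colDot H R j k = n := by
  simp only [colDot]
  rw [Finset.sum_comm]
  simp_rw [← Finset.mul_sum]
  rw [Finset.sum_eq_single_of_mem i₀ hmem fun i _ hi => by rw [hH.sum_row_eq_zero hi₀ hi, mul_zero]]
  simp [hi₀]

def agreeCols (H : Matrix (Fin n) (Fin n) ℤ) (R : Finset (Fin n)) (j : Fin n) :
    Finset (Fin n) :=
  Finset.univ.filter fun k => ∀ i ∈ R, H i j = H i k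

theorem self_mem_agreeCols (R : Finset (Fin n)) (j : Fin n) : j ∈ agreeCols H R j := by
  simp [agreeCols]

theorem IsBSHM.card_agreeCols_mul_eq {R : Finset (Fin n)} {i₀ : Fin n}
    (hB : IsBSHM H R R.card (-1)) (hi₀ : ∀ j, H i₀ j = 1) (hmem : i₀ ∈ R) (j : Fin n) :
    ((agreeCols H R j).card : ℤ) * (R.card + 1) = 2 * n := by
  set C := agreeCols H R j
  have hcol : ∀ k, colDot H R j k = if k ∈ C then (R.card : ℤ) else -1 := fun k => by
    by_cases hk : k ∈ C
    · rw [if_pos hk]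
      exact hB.1.colDot_eq_card_iff.2 (Finset.mem_filter.1 hk).2
    · rw [if_neg hk]
      have hne : j ≠ k := by rintro rfl; exact hk (self_mem_agreeCols R j)
      exact (hB.2 j k hne).resolve_left fun h =>
        hk (Finset.mem_filter.2 ⟨Finset.mem_univ k, hB.1.colDot_eq_card_iff.1 h⟩)
  have hsum := hB.1.sum_colDot_of_allOnes_row_mem hi₀ hmem j
  rw [← Finset.sum_add_sum_compl C, Finset.sum_congr rfl fun k hk => (hcol k).trans (if_pos hk),
    Finset.sum_congr rfl fun k hk => (hcol k).trans (if_neg (Finset.mem_compl.1 hk))] at hsum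
  rw [Finset.sum_const, Finset.sum_const, Finset.card_compl, nsmul_eq_mul, nsmul_eq_mul,
    Nat.cast_sub (Finset.card_le_univ C), Fintype.card_fin] at hsum
  linarith

theorem IsHadamard.sq_card_agreeCols_mul_card_le (hH : _root_.IsHadamard H)
    (R : Finset (Fin n)) (j : Fin n) :
    ((agreeCols H R j).card : ℤ) ^ 2 * R.card ≤ n * (agreeCols H R j).card := by
  set C := agreeCols H R j
  have hrow : ∀ i ∈ R, (∑ k ∈ C, H i k) ^ 2 = C.card ^ 2 := fun i hi => by
    have hagree : ∀ k ∈ C, H i k = H i j := fun k hk => ((Finset.mem_filter.1 hk).2 i hi).symm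
    rw [Finset.sum_congr rfl hagree, Finset.sum_const, nsmul_eq_mul, mul_pow, sq (H i j),
      hH.mul_self_entry, mul_one]
  calc (C.card : ℤ) ^ 2 * R.card = ∑ i ∈ R, (∑ k ∈ C, H i k) ^ 2 := by
        simp [Finset.sum_congr rfl hrow, mul_comm]
    _ ≤ ∑ i, (∑ k ∈ C, H i k) ^ 2 :=
        Finset.sum_le_sum_of_subset_of_nonneg (Finset.subset_univ R) fun _ _ _ => sq_nonneg _
    _ = n * C.card := hH.sum_sq_sum_cols C

theorem IsBSHM.card_le_one_of_allOnes_row_mem {R : Finset (Fin n)} {i₀ : Fin n}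
    (hB : IsBSHM H R R.card (-1)) (hi₀ : ∀ j, H i₀ j = 1) (hmem : i₀ ∈ R) : R.card ≤ 1 := by
  have hcount := hB.card_agreeCols_mul_eq hi₀ hmem i₀
  have hnorm := hB.1.sq_card_agreeCols_mul_card_le R i₀
  have hcpos : (0 : ℤ) < (agreeCols H R i₀).card := by
    exact_mod_cast Finset.card_pos.2 ⟨i₀, self_mem_agreeCols R i₀⟩
  have hnpos : (0 : ℤ) < n := by exact_mod_cast i₀.pos
  have hcm : ((agreeCols H R i₀).card : ℤ) * R.card ≤ n := le_of_mul_le_mul_left (by nlinarith) hcpos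
  have hnm : (n : ℤ) * R.card ≤ n * 1 := by nlinarith
  exact_mod_cast le_of_mul_le_mul_left hnm hnpos

theorem IsHadamard.mul_diagonal (hH : _root_.IsHadamard H) {d : Fin n → ℤ}
    (hd : ∀ j, d j = 1 ∨ d j = -1) : _root_.IsHadamard (H * diagonal d) := by
  refine ⟨fun i j => ?_, ?_⟩
  · rw [Matrix.mul_diagonal]
    rcases hH.1 i j with h | h <;> rcases hd j with h' | h' <;> simp [h, h']
  · have hdd : diagonal d * diagonal d = 1 := by
      rw [diagonal_mul_diagonal, ← diagonal_one]
      exact congrArg diagonal (funext fun j => by rcases hd j with h | h <;> simp [h])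
    rw [transpose_mul, diagonal_transpose, mul_assoc, ← mul_assoc Hᵀ, hH.2, smul_mul, one_mul,
      Matrix.mul_smul, hdd]

theorem IsBSHM.normalize_erase {R : Finset (Fin n)} {i₀ : Fin n}
    (hB : IsBSHM H R R.card 0) (hi₀ : i₀ ∈ R) :
    IsBSHM (H * diagonal (H i₀)) (R.erase i₀) (R.card - 1) (-1) := by
  obtain ⟨hH, hdot⟩ := hB
  refine ⟨hH.mul_diagonal (hH.1 i₀), fun j k hjk => ?_⟩
  have hsplit : colDot (H * diagonal (H i₀)) (R.erase i₀) j k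
      = H i₀ j * H i₀ k * colDot H R j k - 1 := by
    have h := colDot_insert (H := H * diagonal (H i₀)) (Finset.notMem_erase i₀ R) j k
    rw [Finset.insert_erase hi₀, colDot_mul_diagonal, Matrix.mul_diagonal,
      Matrix.mul_diagonal] at h
    linear_combination -h - H i₀ k * H i₀ k * hH.mul_self_entry i₀ j - hH.mul_self_entry i₀ k
  rcases hdot j k hjk with h | h
  · left
    rw [hsplit, h, hH.colDot_eq_card_iff.1 h i₀ hi₀, hH.mul_self_entry, one_mul]
  · right
    rw [hsplit, h, mul_zero, zero_sub]

theorem IsBSHM.insert_allOnes_row {R : Finset (Fin n)} {i₀ : Fin n} {a : ℤ}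
    (hB : IsBSHM H R a (-1)) (hi₀ : ∀ j, H i₀ j = 1) (hnot : i₀ ∉ R) :
    IsBSHM H (insert i₀ R) (a + 1) 0 := by
  refine ⟨hB.1, fun j k hjk => ?_⟩
  rw [colDot_insert hnot, hi₀, hi₀, one_mul]
  rcases hB.2 j k hjk with h | h
  · exact .inl (by rw [h, add_comm])
  · exact .inr (by rw [h, add_neg_cancel])

end

theorem stmt18_general {r s : ℕ} (hs : 1 ≤ s) :
    (∃ (H : Matrix (Fin (4 * r * s)) (Fin (4 * r * s)) ℤ)
       (R : Finset (Fin (4 * r * s))),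
        R.card = 4 * s ∧ IsBSHM H R (4 * (s : ℤ)) 0) ↔
    (∃ (H : Matrix (Fin (4 * r * s)) (Fin (4 * r * s)) ℤ)
       (R : Finset (Fin (4 * r * s))),
        (∃ i₀, ∀ j, H i₀ j = 1) ∧
        R.card = 4 * s - 1 ∧ IsBSHM H R (4 * (s : ℤ) - 1) (-1)) := by
  constructor
  · rintro ⟨H, R, hcard, hB⟩
    have hcard' : ((R.card : ℕ) : ℤ) = 4 * s := by omega
    obtain ⟨i₀, hi₀⟩ := Finset.card_pos.1 (by omega : 0 < R.card)
    refine ⟨H * diagonal (H i₀), R.erase i₀,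
      ⟨i₀, fun j => by rw [Matrix.mul_diagonal, hB.1.mul_self_entry]⟩,
      by rw [Finset.card_erase_of_mem hi₀, hcard], ?_⟩
    rw [← hcard'] at hB ⊢
    exact hB.normalize_erase hi₀
  · rintro ⟨H, R, ⟨i₀, hi₀⟩, hcard, hB⟩
    have hcard' : ((R.card : ℕ) : ℤ) = 4 * s - 1 := by omega
    have hnot : i₀ ∉ R := fun hmem => by
      have := (hcard' ▸ hB).card_le_one_of_allOnes_row_mem hi₀ hmem
      omega
    refine ⟨H, insert i₀ R, by rw [Finset.card_insert_of_notMem hnot, hcard]; omega, ?_⟩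
    simpa using hB.insert_allOnes_row hi₀ hnot

theorem stmt18 {r s : ℕ} (hr : 2 ≤ r) (hs : 1 ≤ s) :
    (∃ (H : Matrix (Fin (4 * r * s)) (Fin (4 * r * s)) ℤ)
       (R : Finset (Fin (4 * r * s))),
        R.card = 4 * s ∧ IsBSHM H R (4 * (s : ℤ)) 0) ↔
    (∃ (H : Matrix (Fin (4 * r * s)) (Fin (4 * r * s)) ℤ)
       (R : Finset (Fin (4 * r * s))),
        (∃ i₀, ∀ j, H i₀ j = 1) ∧
        R.card = 4 * s - 1 ∧ IsBSHM H R (4 * (s : ℤ) - 1) (-1)) :=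
  stmt18_general hs
end

section
/- Let r ≥ 3 be an odd integer and s ≥ 1 an integer, and suppose H = (H₁; H₂) is a nontrivial BSHM(4rs, 4s−1, 4s−1, −1) with respect to H₁. Then r² can be written as a sum of 4rs−4s+1 odd integer squares; that is, there exist odd integers v₁, …, v_{4rs−4s+1} with v₁² + ⋯ + v_{4rs−4s+1}² = r². Consequently r ≥ 4s−1. -/
/-!
A dot product `ℓ = |R|` between two columns of `H₁` means the columns coincide on `R`, so the
columns fall into classes of equal `H₁`-columns. Counting `∑ₖ ⟨cⱼ, cₖ⟩² = nℓ` with the row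
orthogonality of `H` shows that every class has `n / (ℓ + 1) = r` columns. For such a class `C`,
the sums `wᵢ = ∑_{k ∈ C} Hᵢₖ` over the `n - ℓ = 4rs - 4s + 1` rows outside `R` are odd since `r` is
odd, and column orthogonality gives `∑ wᵢ² = r (n - r ℓ) = r²`. As odd squares are at least `1`,
`4rs - 4s + 1 ≤ r²`, i.e. `(r - 1)(r + 1 - 4s) ≥ 0`.
-/

open Matrix

open Finset

theorem IsHadamard.matrix_isHadamard {n : ℕ} {H : Matrix (Fin n) (Fin n) ℤ}
    (hH : _root_.IsHadamard H) : H.IsHadamard := by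
  rcases Nat.eq_zero_or_pos n with rfl | hn
  · exact ⟨fun i => i.elim0, Subsingleton.elim _ _, Subsingleton.elim _ _⟩
  rw [← isHadamard_transpose_iff]
  refine IsHadamard.of_mul_conjTranspose
    (fun i j => Unitary.mem_iff_eq_one_or_eq_neg_one.mpr (hH.1 j i)) ?_ ?_
  · simpa [conjTranspose_eq_transpose_of_trivial] using hH.2
  · simpa using (IsRegular.of_ne_zero (by positivity : (n : ℤ) ≠ 0))

theorem colDot_congr {n : ℕ} {H : Matrix (Fin n) (Fin n) ℤ} {R : Finset (Fin n)}
    {j j' k k' : Fin n} (hj : ∀ i ∈ R, H i j = H i j') (hk : ∀ i ∈ R, H i k = H i k') :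
    colDot H R j k = colDot H R j' k' :=
  sum_congr rfl fun i hi => by rw [hj i hi, hk i hi]

def colClass {n : ℕ} (H : Matrix (Fin n) (Fin n) ℤ) (R : Finset (Fin n)) (j : Fin n) :
    Finset (Fin n) :=
  {k | ∀ i ∈ R, H i k = H i j}

theorem mem_colClass_self {n : ℕ} (H : Matrix (Fin n) (Fin n) ℤ) (R : Finset (Fin n))
    (j : Fin n) : j ∈ colClass H R j := by
  simp [colClass]

namespace Matrix.IsHadamard

variable {n : ℕ} {H : Matrix (Fin n) (Fin n) ℤ} (hH : H.IsHadamard) (R : Finset (Fin n))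
include hH

theorem entry_eq_one_or_neg_one (i j : Fin n) : H i j = 1 ∨ H i j = -1 :=
  Unitary.mem_iff_eq_one_or_eq_neg_one.mp (hH.apply_mem i j)

theorem odd_entry (i j : Fin n) : Odd (H i j) := by
  rcases hH.entry_eq_one_or_neg_one i j with h | h <;> simp [h]

theorem entry_mul_self (i j : Fin n) : H i j * H i j = 1 := by
  rcases hH.entry_eq_one_or_neg_one i j with h | h <;> simp [h]

theorem colDot_self (j : Fin n) : colDot H R j j = R.card := by
  simp [colDot, hH.entry_mul_self]

theorem colDot_of_mem_colClass {j₀ j k : Fin n} (hj : j ∈ colClass H R j₀)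
    (hk : k ∈ colClass H R j₀) : colDot H R j k = R.card := by
  simp only [colClass, mem_filter_univ] at hj hk
  rw [colDot_congr hj hk, hH.colDot_self]

theorem mem_colClass_of_colDot_eq_card {j k : Fin n} (h : colDot H R j k = R.card) :
    k ∈ colClass H R j := by
  have hnonneg : ∀ i ∈ R, 0 ≤ 1 - H i j * H i k := fun i _ => by
    rcases hH.entry_eq_one_or_neg_one i j with h | h <;>
    rcases hH.entry_eq_one_or_neg_one i k with h' | h' <;>
    simp [h, h']
  have hzero : ∑ i ∈ R, (1 - H i j * H i k) = 0 := by
    rw [sum_sub_distrib, ← colDot, h]; simp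
  simp only [colClass, mem_filter_univ]
  intro i hi
  have := (sum_eq_zero_iff_of_nonneg hnonneg).mp hzero i hi
  calc H i k = H i j * H i k * H i j := by linear_combination (-H i k) * hH.entry_mul_self i j
    _ = H i j := by linear_combination (-H i j) * this

theorem sum_mul_row (i i' : Fin n) :
    ∑ k, H i k * H i' k = if i = i' then (n : ℤ) else 0 := by
  simpa [mul_apply, one_apply] using congrFun (congrFun hH.mul_conjTranspose i) i'

theorem sum_mul_col (j k : Fin n) :
    ∑ i, H i j * H i k = if j = k then (n : ℤ) else 0 := by
  simpa [mul_apply, one_apply] using congrFun (congrFun hH.conjTranspose_mul j) k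

theorem sum_colDot_sq (j : Fin n) : ∑ k, colDot H R j k ^ 2 = n * R.card := by
  calc ∑ k, colDot H R j k ^ 2
      = ∑ k, ∑ i ∈ R, ∑ i' ∈ R, H i j * H i' j * (H i k * H i' k) := by
        refine sum_congr rfl fun k _ => ?_
        rw [colDot, sq, sum_mul_sum]
        exact sum_congr rfl fun i _ => sum_congr rfl fun i' _ => by ring
    _ = ∑ i ∈ R, ∑ i' ∈ R, H i j * H i' j * ∑ k, H i k * H i' k := by
        simp_rw [mul_sum]
        rw [sum_comm]
        exact sum_congr rfl fun i _ => sum_comm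
    _ = ∑ i ∈ R, (n : ℤ) := by
        refine sum_congr rfl fun i hi => ?_
        simp [hH.sum_mul_row, hi, hH.entry_mul_self]
    _ = n * R.card := by simp [mul_comm]

theorem sum_compl_mul (j k : Fin n) :
    ∑ i ∈ Rᶜ, H i j * H i k = (if j = k then (n : ℤ) else 0) - colDot H R j k := by
  rw [← hH.sum_mul_col, ← sum_compl_add_sum R, colDot, add_sub_cancel_right]

theorem sum_compl_sq_sum_colClass (j : Fin n) :
    ∑ i ∈ Rᶜ, (∑ k ∈ colClass H R j, H i k) ^ 2 =
      (colClass H R j).card * (n - (colClass H R j).card * R.card) := by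
  set C := colClass H R j
  calc ∑ i ∈ Rᶜ, (∑ k ∈ C, H i k) ^ 2
      = ∑ k ∈ C, ∑ k' ∈ C, ∑ i ∈ Rᶜ, H i k * H i k' := by
        simp_rw [sq, sum_mul_sum]
        rw [sum_comm]
        exact sum_congr rfl fun k _ => sum_comm
    _ = ∑ k ∈ C, ∑ k' ∈ C, ((if k = k' then (n : ℤ) else 0) - R.card) :=
        sum_congr rfl fun k hk => sum_congr rfl fun k' hk' => by
          rw [hH.sum_compl_mul, hH.colDot_of_mem_colClass R hk hk']
    _ = C.card * (n - C.card * R.card) := by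
        simp [sum_sub_distrib, sum_ite_eq]
        ring

end Matrix.IsHadamard

namespace IsBSHM

variable {n : ℕ} {H : Matrix (Fin n) (Fin n) ℤ} {R : Finset (Fin n)}

theorem colDot_eq_neg_one_of_notMem_colClass (hB : IsBSHM H R R.card (-1)) {j k : Fin n}
    (hk : k ∉ colClass H R j) : colDot H R j k = -1 := by
  have hjk : j ≠ k := by rintro rfl; exact hk (mem_colClass_self H R j)
  refine (hB.2 j k hjk).resolve_left fun h => hk ?_
  exact hB.1.matrix_isHadamard.mem_colClass_of_colDot_eq_card R h

theorem card_colClass_mul (hB : IsBSHM H R R.card (-1)) (hR : R.card ≠ 1) (j : Fin n) :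
    (colClass H R j).card * (R.card + 1) = n := by
  have hH := hB.1.matrix_isHadamard
  set C := colClass H R j
  have hin : ∑ k ∈ C, colDot H R j k ^ 2 = C.card * R.card ^ 2 := by
    rw [sum_congr rfl fun k hk => by rw [hH.colDot_of_mem_colClass R (mem_colClass_self H R j) hk]]
    simp
  have hout : ∑ k ∈ Cᶜ, colDot H R j k ^ 2 = n - C.card := by
    rw [sum_congr rfl fun k hk => by
      rw [hB.colDot_eq_neg_one_of_notMem_colClass (mem_compl.mp hk)]]
    simp only [sq, neg_mul_neg, mul_one, sum_const, card_compl, Fintype.card_fin, nsmul_one]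
    exact Nat.cast_sub (by simpa using C.card_le_univ)
  have hsplit := sum_add_sum_compl C (fun k => colDot H R j k ^ 2)
  rw [hin, hout, hH.sum_colDot_sq] at hsplit
  have : ((R.card : ℤ) - 1) * (C.card * (R.card + 1) - n) = 0 := by linear_combination hsplit
  have hR' : (R.card : ℤ) - 1 ≠ 0 := sub_ne_zero.mpr (by exact_mod_cast hR)
  exact_mod_cast sub_eq_zero.mp ((mul_eq_zero.mp this).resolve_left hR')

end IsBSHM

theorem Int.one_le_sq_of_odd {v : ℤ} (hv : Odd v) : 1 ≤ v ^ 2 := by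
  have := Int.one_le_abs (z := v) (by rintro rfl; simp at hv)
  nlinarith [sq_abs v]

theorem Int.card_le_sum_sq_of_odd {ι : Type*} [Fintype ι] {v : ι → ℤ} (hv : ∀ i, Odd (v i)) :
    (Fintype.card ι : ℤ) ≤ ∑ i, v i ^ 2 := by
  simpa using sum_le_sum fun i (_ : i ∈ univ) => Int.one_le_sq_of_odd (hv i)

theorem Finset.odd_sum_of_odd {ι R : Type*} [CommRing R] {s : Finset ι} {f : ι → R}
    (hf : ∀ i ∈ s, Odd (f i)) (hs : Odd s.card) : Odd (∑ i ∈ s, f i) := by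
  have hsplit : ∑ i ∈ s, f i = ∑ i ∈ s, (f i - 1) + s.card := by simp [sum_sub_distrib]
  rw [hsplit]
  refine Even.add_odd (even_sum _ fun i hi => ?_) hs.natCast
  obtain ⟨k, hk⟩ := hf i hi
  exact ⟨k, by rw [hk]; ring⟩

theorem Finset.exists_fin_sum_eq {α M : Type*} [AddCommMonoid M] {s : Finset α} {N : ℕ}
    (hs : s.card = N) (f : α → M) : ∃ e : Fin N → α, ∑ i, f (e i) = ∑ a ∈ s, f a := by
  let e := (Fintype.equivFinOfCardEq (by simpa using hs) : s ≃ Fin N).symm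
  exact ⟨fun i => e i, by rw [e.sum_comp (fun a => f a), sum_coe_sort]⟩

theorem stmt19_general {r s : ℕ} (hr : 3 ≤ r) (hodd : Odd r) (hs : 1 ≤ s)
    (H : Matrix (Fin (4 * r * s)) (Fin (4 * r * s)) ℤ)
    (R : Finset (Fin (4 * r * s))) (hRcard : R.card = 4 * s - 1)
    (hbshm : IsBSHM H R (4 * (s : ℤ) - 1) (-1)) :
    (∃ v : Fin (4 * r * s - 4 * s + 1) → ℤ,
      (∀ i, Odd (v i)) ∧ (∑ i, (v i) ^ 2) = (r : ℤ) ^ 2) ∧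
    4 * s - 1 ≤ r := by
  have hH := hbshm.1.matrix_isHadamard
  have hℓ : (R.card : ℤ) = 4 * s - 1 := by rw [hRcard]; omega
  rw [← hℓ] at hbshm
  have h4s : 4 * s ≤ 4 * r * s := by nlinarith
  let C := colClass H R ⟨0, by omega⟩
  have hC : C.card = r := by
    have := hbshm.card_colClass_mul (by omega) ⟨0, by omega⟩
    rw [hRcard, Nat.sub_add_cancel (by omega)] at this
    exact Nat.eq_of_mul_eq_mul_right (by omega : 0 < 4 * s) (by rw [this]; ring)
  have hN : Rᶜ.card = 4 * r * s - 4 * s + 1 := by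
    rw [card_compl, Fintype.card_fin, hRcard]; omega
  obtain ⟨e, he⟩ := exists_fin_sum_eq hN fun i => (∑ k ∈ C, H i k) ^ 2
  have hv_odd : ∀ i, Odd (∑ k ∈ C, H (e i) k) := fun i =>
    odd_sum_of_odd (fun k _ => hH.odd_entry _ k) (by rwa [hC])
  have hv_sum : ∑ i, (∑ k ∈ C, H (e i) k) ^ 2 = (r : ℤ) ^ 2 := by
    rw [he, hH.sum_compl_sq_sum_colClass, hC, hℓ]; push_cast; ring
  refine ⟨⟨_, hv_odd, hv_sum⟩, ?_⟩
  have hle := Int.card_le_sum_sq_of_odd hv_odd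
  rw [hv_sum, Fintype.card_fin] at hle
  push_cast [h4s] at hle
  have : 4 * (s : ℤ) - 1 ≤ r := by nlinarith
  omega

theorem stmt19 {r s : ℕ} (hr : 3 ≤ r) (hodd : Odd r) (hs : 1 ≤ s)
    (H : Matrix (Fin (4 * r * s)) (Fin (4 * r * s)) ℤ)
    (R : Finset (Fin (4 * r * s))) (hRcard : R.card = 4 * s - 1)
    (h1 : 1 < 4 * s - 1) (h2 : 4 * s - 1 < 4 * r * s - 1)
    (hbshm : IsBSHM H R (4 * (s : ℤ) - 1) (-1)) :
    (∃ v : Fin (4 * r * s - 4 * s + 1) → ℤ,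
      (∀ i, Odd (v i)) ∧ (∑ i, (v i) ^ 2) = (r : ℤ) ^ 2) ∧
    4 * s - 1 ≤ r :=
  stmt19_general hr hodd hs H R hRcard hbshm
end
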